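/- arXiv:1206.1401 — 2 statements merged into one kernel-verified Lean document; each statement's English description precedes it below -/
import Mathlib

section
/- The set of 4×4 rate matrices commuting with the 𝒢-action, namely {Q ∈ 𝔏_GM : K_σ Q = Q K_σ for all σ ∈ 𝒢}, equals the 2-dimensional complex linear span of B^id₁ = P_(12)(34) and B^id₂ = P_(13)(24) + P_(14)(23). (This is the 𝒢-equivariant model, i.e. the Kimura 2-parameter model.) -/
open Matrix

noncomputable section

/-- The elementary rate matrix `L_ij`: entry 1 at `(i,j)`, entry −1 at `(j,j)`, 0 elsewhere. -/
def Lmat (i j : Fin 4) : Matrix (Fin 4) (Fin 4) ℂ :=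
  Matrix.single i j 1 - Matrix.single j j 1

/-- `𝔏_GM`: the 4×4 complex matrices each of whose columns sums to zero. -/
def LGMset : Set (Matrix (Fin 4) (Fin 4) ℂ) :=
  {Q | ∀ j, ∑ i, Q i j = 0}

/-- The permutation matrix `K_σ`, with entry 1 in position `(σ j, j)` for each `j`. -/
def Kmat (σ : Equiv.Perm (Fin 4)) : Matrix (Fin 4) (Fin 4) ℂ :=
  Matrix.of fun i j => if i = σ j then 1 else 0

/-- The permutation vector `P_σ := K_σ − I`. -/
def Pmat (σ : Equiv.Perm (Fin 4)) : Matrix (Fin 4) (Fin 4) ℂ :=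
  Kmat σ - 1

/-- The 4-cycle (1324) (on `{1,2,3,4}`, i.e. `0 ↦ 2 ↦ 1 ↦ 3 ↦ 0` on `Fin 4`). -/
def c1324 : Equiv.Perm (Fin 4) := Equiv.swap 0 3 * Equiv.swap 0 1 * Equiv.swap 0 2

/-- The 4-cycle (1423) (on `{1,2,3,4}`, i.e. `0 ↦ 3 ↦ 1 ↦ 2 ↦ 0` on `Fin 4`). -/
def c1423 : Equiv.Perm (Fin 4) := Equiv.swap 0 2 * Equiv.swap 0 1 * Equiv.swap 0 3

/-- The group 𝒢 = {e, (12), (34), (12)(34), (13)(24), (14)(23), (1324), (1423)},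
presented as a list of its eight elements. -/
def Glist : List (Equiv.Perm (Fin 4)) :=
  [1, Equiv.swap 0 1, Equiv.swap 2 3, Equiv.swap 0 1 * Equiv.swap 2 3,
   Equiv.swap 0 2 * Equiv.swap 1 3, Equiv.swap 0 3 * Equiv.swap 1 2, c1324, c1423]

def Bid1 : Matrix (Fin 4) (Fin 4) ℂ := Pmat (Equiv.swap 0 1 * Equiv.swap 2 3)
def Bid2 : Matrix (Fin 4) (Fin 4) ℂ :=
  Pmat (Equiv.swap 0 2 * Equiv.swap 1 3) + Pmat (Equiv.swap 0 3 * Equiv.swap 1 2)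

/-!
A matrix commutes with `K_σ` exactly when its entries are invariant under the diagonal action
`(i, j) ↦ (σ i, σ j)`. Since 𝒢 is transitive, an invariant matrix is determined by its first
column, and `(2 3) ∈ 𝒢` forces `Q 3 0 = Q 2 0`; the zero column sum then fixes `Q 0 0`. So an
equivariant rate matrix is determined by `Q 1 0` and `Q 2 0`, which are exactly the coordinates
of `Bid1` and `Bid2` in these two positions. Conversely `Bid1` and `Bid2` are equivariant because
conjugation by 𝒢 fixes `(12)(34)` and fixes or swaps `(13)(24)` and `(14)(23)`.
-/

open Equiv

section PermutationMatrices

variable (σ τ : Perm (Fin 4)) (Q : Matrix (Fin 4) (Fin 4) ℂ)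

lemma Kmat_mul_apply (i j : Fin 4) : (Kmat σ * Q) i j = Q (σ⁻¹ i) j := by
  simp [Kmat, mul_apply, ← Equiv.symm_apply_eq]

lemma mul_Kmat_apply (i j : Fin 4) : (Q * Kmat σ) i j = Q i (σ j) := by
  simp [Kmat, mul_apply]

lemma Kmat_mul_eq_mul_Kmat_iff :
    Kmat σ * Q = Q * Kmat σ ↔ ∀ i j, Q (σ i) (σ j) = Q i j := by
  simp only [← Matrix.ext_iff, Kmat_mul_apply, mul_Kmat_apply]
  constructor
  · intro h i j
    simpa using (h (σ i) j).symm
  · intro h i j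
    simpa using (h (σ⁻¹ i) j).symm

lemma Pmat_apply_perm (i j : Fin 4) : Pmat τ (σ i) (σ j) = Pmat (σ⁻¹ * τ * σ) i j := by
  simp [Pmat, Kmat, one_apply, Equiv.eq_symm_apply]

lemma Pmat_mem_LGMset : Pmat σ ∈ LGMset := by
  intro j
  simp [Pmat, Kmat, one_apply, Finset.sum_sub_distrib]

end PermutationMatrices

def rateMatrices : Submodule ℂ (Matrix (Fin 4) (Fin 4) ℂ) where
  carrier := LGMset
  add_mem' {A B} hA hB j := by simp [Finset.sum_add_distrib, hA j, hB j]
  zero_mem' j := by simp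
  smul_mem' c A hA j := by simp [← Finset.mul_sum, hA j]

def equivariantModel : Submodule ℂ (Matrix (Fin 4) (Fin 4) ℂ) :=
  rateMatrices ⊓ (Subalgebra.centralizer ℂ (Kmat '' {σ | σ ∈ Glist})).toSubmodule

lemma mem_equivariantModel {Q : Matrix (Fin 4) (Fin 4) ℂ} :
    Q ∈ equivariantModel ↔ Q ∈ LGMset ∧ ∀ σ ∈ Glist, Kmat σ * Q = Q * Kmat σ := by
  simp only [equivariantModel, Submodule.mem_inf, Subalgebra.mem_toSubmodule,
    Subalgebra.mem_centralizer_iff, Set.forall_mem_image]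
  rfl

lemma exists_mem_Glist_apply_eq_zero (j : Fin 4) : ∃ σ ∈ Glist, σ j = 0 := by
  revert j
  decide

lemma Bid1_mem_equivariantModel : Bid1 ∈ equivariantModel := by
  have hconj : ∀ σ ∈ Glist, σ⁻¹ * (swap 0 1 * swap 2 3) * σ = swap 0 1 * swap 2 3 := by
    decide
  refine mem_equivariantModel.2 ⟨Pmat_mem_LGMset _, fun σ hσ => ?_⟩
  refine (Kmat_mul_eq_mul_Kmat_iff σ _).2 fun i j => ?_
  rw [Bid1, Pmat_apply_perm, hconj σ hσ]

lemma Bid2_mem_equivariantModel : Bid2 ∈ equivariantModel := by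
  have hconj : ∀ σ ∈ Glist,
      (σ⁻¹ * (swap 0 2 * swap 1 3) * σ = swap 0 2 * swap 1 3 ∧
        σ⁻¹ * (swap 0 3 * swap 1 2) * σ = swap 0 3 * swap 1 2) ∨
      (σ⁻¹ * (swap 0 2 * swap 1 3) * σ = swap 0 3 * swap 1 2 ∧
        σ⁻¹ * (swap 0 3 * swap 1 2) * σ = swap 0 2 * swap 1 3) := by
    decide
  have hcol : Bid2 ∈ LGMset := rateMatrices.add_mem (Pmat_mem_LGMset _) (Pmat_mem_LGMset _)
  refine mem_equivariantModel.2 ⟨hcol, fun σ hσ => ?_⟩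
  refine (Kmat_mul_eq_mul_Kmat_iff σ _).2 fun i j => ?_
  rcases hconj σ hσ with ⟨h₁, h₂⟩ | ⟨h₁, h₂⟩ <;>
    simp only [Bid2, Matrix.add_apply, Pmat_apply_perm, h₁, h₂, add_comm]

lemma Bid1_apply_one_zero : Bid1 1 0 = 1 := by simp [Bid1, Pmat, Kmat, swap_apply_of_ne_of_ne]
lemma Bid1_apply_two_zero : Bid1 2 0 = 0 := by simp [Bid1, Pmat, Kmat, swap_apply_of_ne_of_ne]
lemma Bid2_apply_one_zero : Bid2 1 0 = 0 := by simp [Bid2, Pmat, Kmat, swap_apply_of_ne_of_ne]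
lemma Bid2_apply_two_zero : Bid2 2 0 = 1 := by simp [Bid2, Pmat, Kmat, swap_apply_of_ne_of_ne]

lemma eq_zero_of_mem_equivariantModel {Q : Matrix (Fin 4) (Fin 4) ℂ} (hQ : Q ∈ equivariantModel)
    (h₁₀ : Q 1 0 = 0) (h₂₀ : Q 2 0 = 0) : Q = 0 := by
  obtain ⟨hsum, hcomm⟩ := mem_equivariantModel.1 hQ
  have hinv : ∀ σ ∈ Glist, ∀ i j, Q (σ i) (σ j) = Q i j :=
    fun σ hσ => (Kmat_mul_eq_mul_Kmat_iff σ Q).1 (hcomm σ hσ)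
  have h₃₀ : Q 3 0 = 0 := by
    have h := hinv (swap 2 3) (by simp [Glist]) 3 0
    rwa [swap_apply_right, swap_apply_of_ne_of_ne (by decide) (by decide), h₂₀, eq_comm] at h
  have h₀₀ : Q 0 0 = 0 := by
    simpa [Fin.sum_univ_four, h₁₀, h₂₀, h₃₀] using hsum 0
  have hcol₀ : ∀ i, Q i 0 = 0 := by
    intro i
    fin_cases i <;> assumption
  ext i j
  obtain ⟨σ, hσ, hσj⟩ := exists_mem_Glist_apply_eq_zero j
  rw [← hinv σ hσ, hσj, hcol₀, Matrix.zero_apply]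

lemma equivariantModel_eq_span : equivariantModel = Submodule.span ℂ {Bid1, Bid2} := by
  refine le_antisymm (fun Q hQ => Submodule.mem_span_pair.2 ⟨Q 1 0, Q 2 0, ?_⟩) ?_
  · have hdiff : Q - (Q 1 0 • Bid1 + Q 2 0 • Bid2) ∈ equivariantModel :=
      sub_mem hQ (add_mem (Submodule.smul_mem _ _ Bid1_mem_equivariantModel)
        (Submodule.smul_mem _ _ Bid2_mem_equivariantModel))
    refine (sub_eq_zero.1 (eq_zero_of_mem_equivariantModel hdiff ?_ ?_)).symm <;>
      simp [Bid1_apply_one_zero, Bid1_apply_two_zero, Bid2_apply_one_zero, Bid2_apply_two_zero]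
  · rw [Submodule.span_le, Set.insert_subset_iff, Set.singleton_subset_iff]
    exact ⟨Bid1_mem_equivariantModel, Bid2_mem_equivariantModel⟩

lemma linearIndependent_Bid : LinearIndependent ℂ ![Bid1, Bid2] := by
  refine LinearIndependent.pair_iff.2 fun s t h => ⟨?_, ?_⟩
  · simpa [Bid1_apply_one_zero, Bid2_apply_one_zero] using congrFun (congrFun h 1) 0
  · simpa [Bid1_apply_two_zero, Bid2_apply_two_zero] using congrFun (congrFun h 2) 0

theorem equivariant_model_is_kimura_two_parameter :
    {Q : Matrix (Fin 4) (Fin 4) ℂ | Q ∈ LGMset ∧ ∀ σ ∈ Glist, Kmat σ * Q = Q * Kmat σ} =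
      (Submodule.span ℂ {Bid1, Bid2} : Set (Matrix (Fin 4) (Fin 4) ℂ)) ∧
    Module.finrank ℂ ↥(Submodule.span ℂ ({Bid1, Bid2} : Set (Matrix (Fin 4) (Fin 4) ℂ))) = 2 := by
  constructor
  · rw [← equivariantModel_eq_span]
    ext Q
    exact mem_equivariantModel.symm
  · rw [← Matrix.range_cons_cons_empty Bid1 Bid2 ![], finrank_span_eq_card linearIndependent_Bid,
      Fintype.card_fin]
end
end

section
/- Let L be a 4×4 matrix. Then L belongs to 𝔏_GM⁺ (i.e. L is a rate matrix whose off-diagonal entries are real and nonnegative) and satisfies K_σ L K_σ⁻¹ = L for every σ ∈ 𝒢 if and only if there exist real numbers a, b ≥ 0 such that L = a·B^id₁ + b·B^id₂, where B^id₁ = P_(12)(34) and B^id₂ = P_(13)(24) + P_(14)(23). (Hence the one-dimensional Lie Markov models with 𝒢 symmetry form the continuum spanned by the matrices a·B^id₁ + b·B^id₂ with a, b ≥ 0.) -/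
open Matrix

noncomputable section

/-- `𝔏_GM⁺`: nonnegative real linear combinations of the elementary rate matrices. -/
def LGMplus : Set (Matrix (Fin 4) (Fin 4) ℂ) :=
  {Q | ∃ α : Fin 4 → Fin 4 → ℝ, (∀ i j, 0 ≤ α i j) ∧
    Q = ∑ i, ∑ j, if i = j then 0 else (α i j : ℂ) • Lmat i j}

/-!
Conjugating by `K_σ` permutes rows and columns by `σ`, so a `𝒢`-invariant matrix is constant on
the `𝒢`-orbits of positions. The off-diagonal positions form two orbits, those of `(2,1)` and
`(3,1)` (`(1,0)` and `(2,0)` in `Fin 4`), and vanishing column sums fix the diagonal; hence such a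
rate matrix is determined by two entries, which `B^id₁` and `B^id₂` realise. These two are
`𝒢`-invariant because `(12)(34)` is central in `𝒢` and conjugation by `𝒢` permutes
`{(13)(24), (14)(23)}`.
-/

open scoped ComplexOrder

theorem Matrix.eq_zero_of_sum_apply_eq_zero_of_offDiag {n R : Type*} [Fintype n] [DecidableEq n]
    [AddCommMonoid R] {M : Matrix n n R} (hcol : ∀ j, ∑ i, M i j = 0)
    (hoff : ∀ i j, i ≠ j → M i j = 0) : M = 0 := by
  ext i j
  obtain rfl | hij := eq_or_ne i j
  · rw [zero_apply, ← hcol i, Finset.sum_eq_single i (fun k _ hk => hoff k i hk) (by simp)]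
  · exact hoff i j hij

lemma Kmat_eq_permMatrix (σ : Equiv.Perm (Fin 4)) : Kmat σ = σ⁻¹.permMatrix ℂ := by
  ext i j
  simp [Kmat, PEquiv.toMatrix_apply, Equiv.eq_symm_apply, eq_comm]

lemma Kmat_mul (σ τ : Equiv.Perm (Fin 4)) : Kmat (σ * τ) = Kmat σ * Kmat τ := by
  simp only [Kmat_eq_permMatrix, _root_.mul_inv_rev, permMatrix_mul]

lemma Kmat_one : Kmat 1 = 1 := by
  rw [Kmat_eq_permMatrix, inv_one, permMatrix_one]

lemma inv_Kmat (σ : Equiv.Perm (Fin 4)) : (Kmat σ)⁻¹ = Kmat σ⁻¹ :=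
  inv_eq_right_inv <| by rw [← Kmat_mul, mul_inv_cancel, Kmat_one]

lemma Kmat_conj_eq_self_iff (σ : Equiv.Perm (Fin 4)) (L : Matrix (Fin 4) (Fin 4) ℂ) :
    Kmat σ * L * (Kmat σ)⁻¹ = L ↔ ∀ i j, L (σ i) (σ j) = L i j := by
  rw [inv_Kmat, Kmat_eq_permMatrix, Kmat_eq_permMatrix, inv_inv, PEquiv.toMatrix_toPEquiv_mul,
    PEquiv.mul_toMatrix_toPEquiv, ← Matrix.ext_iff]
  refine ⟨fun h i j => ?_, fun h i j => ?_⟩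
  · simpa using (h (σ i) (σ j)).symm
  · simpa using (h (σ⁻¹ i) (σ⁻¹ j)).symm

lemma Kmat_conj_Pmat (τ σ : Equiv.Perm (Fin 4)) :
    Kmat τ * Pmat σ * (Kmat τ)⁻¹ = Pmat (τ * σ * τ⁻¹) := by
  rw [Pmat, Pmat, inv_Kmat, Kmat_mul, Kmat_mul, mul_sub, sub_mul, mul_one, ← Kmat_mul τ τ⁻¹,
    mul_inv_cancel, Kmat_one]

lemma Pmat_apply_nonneg (σ : Equiv.Perm (Fin 4)) {i j : Fin 4} (hij : i ≠ j) : 0 ≤ Pmat σ i j := by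
  simp only [Pmat, Kmat, Matrix.sub_apply, of_apply, one_apply_ne hij, sub_zero]
  split_ifs <;> norm_num

def LGMsubmodule : Submodule ℂ (Matrix (Fin 4) (Fin 4) ℂ) where
  carrier := LGMset
  add_mem' {A B} hA hB j := by simp [Finset.sum_add_distrib, hA j, hB j]
  zero_mem' j := by simp
  smul_mem' c A hA j := by simp [← Finset.mul_sum, hA j]

lemma Lmat_mem_LGMsubmodule (i j : Fin 4) : Lmat i j ∈ LGMsubmodule := fun k => by
  simp [Lmat, Matrix.single_apply, Finset.sum_sub_distrib, ite_and]

lemma Pmat_mem_LGMsubmodule (σ : Equiv.Perm (Fin 4)) : Pmat σ ∈ LGMsubmodule := fun k => by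
  simp [Pmat, Kmat, Matrix.one_apply, Finset.sum_sub_distrib]

lemma Lmat_self (i : Fin 4) : Lmat i i = 0 := sub_self _

lemma sum_smul_Lmat_apply (c : Fin 4 → Fin 4 → ℂ) (p q : Fin 4) :
    (∑ i, ∑ j, c i j • Lmat i j) p q = c p q - if p = q then ∑ i, c i q else 0 := by
  obtain rfl | hpq := eq_or_ne p q <;>
    simp [*, Lmat, Matrix.sum_apply, Matrix.single_apply, mul_sub, Finset.sum_sub_distrib, ite_and]

lemma sum_smul_Lmat_eq_self {Q : Matrix (Fin 4) (Fin 4) ℂ} (hQ : Q ∈ LGMset) :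
    ∑ i, ∑ j, Q i j • Lmat i j = Q := by
  ext p q
  refine (sum_smul_Lmat_apply Q p q).trans ?_
  split_ifs with hpq
  · rw [hpq, hQ q, sub_zero]
  · rw [sub_zero]

lemma ite_smul_Lmat (c : ℂ) (i j : Fin 4) : (if i = j then 0 else c • Lmat i j) = c • Lmat i j :=
  ite_eq_right_iff.2 fun h => by rw [h, Lmat_self, smul_zero]

lemma mem_LGMplus_iff {Q : Matrix (Fin 4) (Fin 4) ℂ} :
    Q ∈ LGMplus ↔ Q ∈ LGMset ∧ ∀ i j, i ≠ j → 0 ≤ Q i j := by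
  simp only [LGMplus, Set.mem_ofPred_eq, ite_smul_Lmat]
  constructor
  · rintro ⟨α, hα, rfl⟩
    refine ⟨Submodule.sum_mem _ fun i _ => Submodule.sum_mem _ fun j _ =>
      Submodule.smul_mem _ _ (Lmat_mem_LGMsubmodule i j), fun i j hij => ?_⟩
    rw [sum_smul_Lmat_apply, if_neg hij, sub_zero]
    exact Complex.zero_le_real.2 (hα i j)
  · rintro ⟨hQ, hoff⟩
    refine ⟨fun i j => if i = j then 0 else (Q i j).re, fun i j => ?_, ?_⟩
    · dsimp only
      split_ifs with hij
      · exact le_rfl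
      · exact (Complex.nonneg_iff.1 (hoff i j hij)).1
    · conv_lhs => rw [← sum_smul_Lmat_eq_self hQ]
      refine Finset.sum_congr rfl fun i _ => Finset.sum_congr rfl fun j _ => ?_
      dsimp only
      split_ifs with hij
      · rw [hij, Lmat_self, smul_zero, smul_zero]
      · rw [← Complex.eq_re_of_ofReal_le (r := 0) (hoff i j hij)]

lemma smul_Bid1_add_smul_Bid2_mem_LGMsubmodule (a b : ℂ) :
    a • Bid1 + b • Bid2 ∈ LGMsubmodule :=
  add_mem (Submodule.smul_mem _ _ (Pmat_mem_LGMsubmodule _)) (Submodule.smul_mem _ _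
    (add_mem (Pmat_mem_LGMsubmodule _) (Pmat_mem_LGMsubmodule _)))

lemma Kmat_conj_Bid1 {τ : Equiv.Perm (Fin 4)} (hτ : τ ∈ Glist) :
    Kmat τ * Bid1 * (Kmat τ)⁻¹ = Bid1 := by
  have central : ∀ τ ∈ Glist,
      τ * (Equiv.swap 0 1 * Equiv.swap 2 3) * τ⁻¹ = Equiv.swap 0 1 * Equiv.swap 2 3 := by
    decide
  rw [Bid1, Kmat_conj_Pmat, central τ hτ]

lemma Kmat_conj_Bid2 {τ : Equiv.Perm (Fin 4)} (hτ : τ ∈ Glist) :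
    Kmat τ * Bid2 * (Kmat τ)⁻¹ = Bid2 := by
  set s : Equiv.Perm (Fin 4) := Equiv.swap 0 2 * Equiv.swap 1 3
  set t : Equiv.Perm (Fin 4) := Equiv.swap 0 3 * Equiv.swap 1 2
  have fix_or_swap : ∀ τ ∈ Glist,
      τ * s * τ⁻¹ = s ∧ τ * t * τ⁻¹ = t ∨ τ * s * τ⁻¹ = t ∧ τ * t * τ⁻¹ = s := by
    decide
  rw [Bid2, mul_add, add_mul, Kmat_conj_Pmat, Kmat_conj_Pmat]
  rcases fix_or_swap τ hτ with ⟨hs, ht⟩ | ⟨hs, ht⟩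
  · rw [hs, ht]
  · rw [hs, ht, add_comm]

lemma Kmat_conj_smul_Bid1_add_smul_Bid2 {τ : Equiv.Perm (Fin 4)} (hτ : τ ∈ Glist) (a b : ℂ) :
    Kmat τ * (a • Bid1 + b • Bid2) * (Kmat τ)⁻¹ = a • Bid1 + b • Bid2 := by
  rw [mul_add, add_mul, Matrix.mul_smul, Matrix.smul_mul, Matrix.mul_smul, Matrix.smul_mul,
    Kmat_conj_Bid1 hτ, Kmat_conj_Bid2 hτ]

lemma eq_zero_of_forall_Glist_apply_eq {M : Matrix (Fin 4) (Fin 4) ℂ} (hM : M ∈ LGMset)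
    (hinv : ∀ σ ∈ Glist, ∀ i j, M (σ i) (σ j) = M i j) (h10 : M 1 0 = 0) (h20 : M 2 0 = 0) :
    M = 0 := by
  have orbit_rep : ∀ i j : Fin 4, i ≠ j → ∃ σ ∈ Glist, (σ i = 1 ∨ σ i = 2) ∧ σ j = 0 := by
    decide
  refine eq_zero_of_sum_apply_eq_zero_of_offDiag hM fun i j hij => ?_
  obtain ⟨σ, hσ, hi | hi, hj⟩ := orbit_rep i j hij <;>
    rw [← hinv σ hσ, hi, hj] <;> assumption

lemma eq_smul_Bid1_add_smul_Bid2 {L : Matrix (Fin 4) (Fin 4) ℂ} (hL : L ∈ LGMset)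
    (hinv : ∀ σ ∈ Glist, Kmat σ * L * (Kmat σ)⁻¹ = L) :
    L = L 1 0 • Bid1 + L 2 0 • Bid2 := by
  rw [← sub_eq_zero]
  refine eq_zero_of_forall_Glist_apply_eq
    (Submodule.sub_mem _ hL (smul_Bid1_add_smul_Bid2_mem_LGMsubmodule _ _)) (fun σ hσ => ?_) ?_ ?_
  · rw [← Kmat_conj_eq_self_iff, mul_sub, sub_mul, hinv σ hσ,
      Kmat_conj_smul_Bid1_add_smul_Bid2 hσ]
  all_goals simp [Bid1, Bid2, Pmat, Kmat, Equiv.swap_apply_def]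

lemma smul_Bid1_add_smul_Bid2_mem_LGMplus {a b : ℝ} (ha : 0 ≤ a) (hb : 0 ≤ b) :
    (a : ℂ) • Bid1 + (b : ℂ) • Bid2 ∈ LGMplus := by
  refine mem_LGMplus_iff.2 ⟨smul_Bid1_add_smul_Bid2_mem_LGMsubmodule _ _, fun i j hij => ?_⟩
  simp only [Matrix.add_apply, Matrix.smul_apply, smul_eq_mul, Bid1, Bid2]
  exact add_nonneg (mul_nonneg (Complex.zero_le_real.2 ha) (Pmat_apply_nonneg _ hij))
    (mul_nonneg (Complex.zero_le_real.2 hb)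
      (add_nonneg (Pmat_apply_nonneg _ hij) (Pmat_apply_nonneg _ hij)))

theorem one_dimensional_G_invariant_stochastic_rate_matrices
    (L : Matrix (Fin 4) (Fin 4) ℂ) :
    (L ∈ LGMplus ∧ ∀ σ ∈ Glist, Kmat σ * L * (Kmat σ)⁻¹ = L) ↔
      ∃ a b : ℝ, 0 ≤ a ∧ 0 ≤ b ∧ L = (a : ℂ) • Bid1 + (b : ℂ) • Bid2 := by
  constructor
  · rintro ⟨hL, hinv⟩
    obtain ⟨hLGM, hoff⟩ := mem_LGMplus_iff.1 hL
    have h10 := hoff 1 0 (by decide)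
    have h20 := hoff 2 0 (by decide)
    refine ⟨(L 1 0).re, (L 2 0).re, (Complex.nonneg_iff.1 h10).1, (Complex.nonneg_iff.1 h20).1, ?_⟩
    rw [← Complex.eq_re_of_ofReal_le (r := 0) h10, ← Complex.eq_re_of_ofReal_le (r := 0) h20]
    exact eq_smul_Bid1_add_smul_Bid2 hLGM hinv
  · rintro ⟨a, b, ha, hb, rfl⟩
    exact ⟨smul_Bid1_add_smul_Bid2_mem_LGMplus ha hb,
      fun τ hτ => Kmat_conj_smul_Bid1_add_smul_Bid2 hτ _ _⟩
end
end
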